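/- Let g(x) = x₁² + x₂² + x₃² on ℝ³ and consider the vector field X¹(x) = (−x₁ + x₂ + x₁g(x), −x₁ − x₂ + x₂g(x), −x₃ + x₃g(x)). With φ(x) = g(x)^{−5/2} on ℝ³ ∖ {0}, the divergence of Z₁(x) = φ(x)X¹(x) is strictly positive for all x ∈ ℝ³ ∖ {0}. -/

import Mathlib

/-! For a skew matrix `A` and `g = x ⬝ᵥ x`, the field `X = (g - 1) • x + A x` has radial component
`x ⬝ᵥ X = g (g - 1)` and divergence `(n + 2) g - n`: the rotation `A` contributes neither to the
radial part nor to the trace. The product rule gives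
`div (g ^ p • X) = g ^ (p - 1) (2 p (x ⬝ᵥ X) + g div X)`, and for `p = -(n + 2) / 2` every term
except `2 g ^ p` cancels. The theorem is the case `n = 3` with `A` the rotation generator of the
`x₁x₂`-plane. -/

open Matrix Finset

theorem Matrix.dotProduct_self_pos {ι R : Type*} [Fintype ι] [Ring R] [LinearOrder R]
    [IsStrictOrderedRing R] {x : ι → R} (hx : x ≠ 0) : 0 < x ⬝ᵥ x :=
  lt_of_le_of_ne (sum_nonneg fun i _ => mul_self_nonneg (x i))
    (Ne.symm (dotProduct_self_eq_zero.not.2 hx))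

section Skew

variable {n R : Type*} [Fintype n] [CommRing R] [IsAddTorsionFree R] {A : Matrix n n R}

theorem Matrix.trace_eq_zero_of_transpose_eq_neg (hA : Aᵀ = -A) : A.trace = 0 := by
  have h := congrArg Matrix.trace hA
  rwa [trace_transpose, trace_neg, self_eq_neg] at h

theorem Matrix.dotProduct_mulVec_self_eq_zero_of_transpose_eq_neg (hA : Aᵀ = -A) (x : n → R) :
    x ⬝ᵥ A *ᵥ x = 0 := by
  have h : x ⬝ᵥ A *ᵥ x = x ⬝ᵥ Aᵀ *ᵥ x := by
    rw [mulVec_transpose, dotProduct_mulVec, dotProduct_comm]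
  rwa [hA, neg_mulVec, dotProduct_neg, self_eq_neg] at h

end Skew

section Divergence

variable {ι : Type*} [Fintype ι]

theorem hasFDerivAt_mulVec {m : Type*} (A : Matrix m ι ℝ) (x : ι → ℝ) :
    HasFDerivAt (fun y => A *ᵥ y) (LinearMap.toContinuousLinearMap A.mulVecLin) x :=
  (LinearMap.toContinuousLinearMap A.mulVecLin).hasFDerivAt

theorem hasFDerivAt_dotProduct_self (x : ι → ℝ) :
    HasFDerivAt (fun y => y ⬝ᵥ y)
      ((2 : ℝ) • LinearMap.toContinuousLinearMap (dotProductBilin ℝ ℝ x)) x := by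
  have hcoord (i : ι) :
      HasFDerivAt (fun y : ι → ℝ => y i) (ContinuousLinearMap.proj (R := ℝ) i) x :=
    hasFDerivAt_apply i x
  have hsum : HasFDerivAt (fun y : ι → ℝ => ∑ i, y i * y i)
      (∑ i, (x i • ContinuousLinearMap.proj i + x i • ContinuousLinearMap.proj i)) x :=
    HasFDerivAt.fun_sum fun i _ => (hcoord i).mul (hcoord i)
  refine hsum.congr_fderiv ?_
  ext v
  simp [dotProduct, two_mul, sum_add_distrib]

variable [DecidableEq ι]

noncomputable def divergence (F : (ι → ℝ) → ι → ℝ) (x : ι → ℝ) : ℝ :=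
  ∑ i, fderiv ℝ (fun y => F y i) x (Pi.single i 1)

theorem divergence_eq_sum_fderiv_apply {F : (ι → ℝ) → ι → ℝ} {x : ι → ℝ}
    (hF : DifferentiableAt ℝ F x) :
    divergence F x = ∑ i, fderiv ℝ F x (Pi.single i 1) i := by
  simp [divergence, fderiv_apply hF]

theorem divergence_add {F G : (ι → ℝ) → ι → ℝ} {x : ι → ℝ}
    (hF : DifferentiableAt ℝ F x) (hG : DifferentiableAt ℝ G x) :
    divergence (fun y => F y + G y) x = divergence F x + divergence G x := by
  rw [divergence_eq_sum_fderiv_apply (F := fun y => F y + G y) (hF.add hG),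
    divergence_eq_sum_fderiv_apply hF, divergence_eq_sum_fderiv_apply hG, fderiv_fun_add hF hG,
    ← sum_add_distrib]
  rfl

theorem divergence_smul {φ : (ι → ℝ) → ℝ} {F : (ι → ℝ) → ι → ℝ} {x : ι → ℝ}
    (hφ : DifferentiableAt ℝ φ x) (hF : DifferentiableAt ℝ F x) :
    divergence (fun y => φ y • F y) x = fderiv ℝ φ x (F x) + φ x * divergence F x := by
  have hφF : fderiv ℝ φ x (F x) = ∑ i, F x i * fderiv ℝ φ x (Pi.single i 1) := by
    conv_lhs => rw [pi_eq_sum_univ' (F x)]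
    simp only [map_sum, map_smul, smul_eq_mul]
  simp only [divergence, Pi.smul_apply, smul_eq_mul, hφF, mul_sum, ← sum_add_distrib]
  refine sum_congr rfl fun i _ => ?_
  rw [fderiv_fun_mul hφ (differentiableAt_pi.1 hF i)]
  simp only [_root_.add_apply, _root_.smul_apply, smul_eq_mul]
  ring

theorem divergence_mulVec (A : Matrix ι ι ℝ) (x : ι → ℝ) :
    divergence (fun y => A *ᵥ y) x = A.trace := by
  rw [divergence_eq_sum_fderiv_apply (hasFDerivAt_mulVec A x).differentiableAt,
    (hasFDerivAt_mulVec A x).fderiv]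
  simp [Matrix.trace]

theorem divergence_id (x : ι → ℝ) : divergence (fun y => y) x = Fintype.card ι := by
  simpa using divergence_mulVec (1 : Matrix ι ι ℝ) x

theorem divergence_dotProduct_self_rpow_smul (p : ℝ) {F : (ι → ℝ) → ι → ℝ} {x : ι → ℝ}
    (hx : x ≠ 0) (hF : DifferentiableAt ℝ F x) :
    divergence (fun y => (y ⬝ᵥ y) ^ p • F y) x =
      (x ⬝ᵥ x) ^ (p - 1) * (2 * p * (x ⬝ᵥ F x) + (x ⬝ᵥ x) * divergence F x) := by
  have hxx : x ⬝ᵥ x ≠ 0 := (dotProduct_self_pos hx).ne'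
  have hφ := (hasFDerivAt_dotProduct_self x).rpow_const (p := p) (Or.inl hxx)
  have hpow : (x ⬝ᵥ x) ^ p = (x ⬝ᵥ x) ^ (p - 1) * (x ⬝ᵥ x) := by
    rw [← Real.rpow_add_one hxx, sub_add_cancel]
  rw [divergence_smul hφ.differentiableAt hF, hφ.fderiv, hpow]
  simp only [_root_.smul_apply, LinearMap.coe_toContinuousLinearMap', dotProductBilin_apply_apply,
    smul_eq_mul]
  ring

end Divergence

section SpiralField

variable {ι : Type*} [Fintype ι]

def spiralField (A : Matrix ι ι ℝ) (y : ι → ℝ) : ι → ℝ := (y ⬝ᵥ y - 1) • y + A *ᵥ y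

theorem differentiableAt_spiralField (A : Matrix ι ι ℝ) (x : ι → ℝ) :
    DifferentiableAt ℝ (spiralField A) x :=
  (((hasFDerivAt_dotProduct_self x).differentiableAt.sub_const 1).smul differentiableAt_id).add
    (hasFDerivAt_mulVec A x).differentiableAt

theorem dotProduct_spiralField (A : Matrix ι ι ℝ) (x : ι → ℝ) :
    x ⬝ᵥ spiralField A x = (x ⬝ᵥ x - 1) * (x ⬝ᵥ x) + x ⬝ᵥ A *ᵥ x := by
  rw [spiralField, dotProduct_add, dotProduct_smul, smul_eq_mul]

variable [DecidableEq ι]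

theorem divergence_spiralField (A : Matrix ι ι ℝ) (x : ι → ℝ) :
    divergence (spiralField A) x =
      (Fintype.card ι + 2) * (x ⬝ᵥ x) - Fintype.card ι + A.trace := by
  have hψ := (hasFDerivAt_dotProduct_self x).sub_const 1
  unfold spiralField
  rw [divergence_add (F := fun y => (y ⬝ᵥ y - 1) • y)
      (hψ.differentiableAt.smul differentiableAt_id) (hasFDerivAt_mulVec A x).differentiableAt,
    divergence_smul hψ.differentiableAt differentiableAt_fun_id, hψ.fderiv, divergence_id,
    divergence_mulVec]
  simp only [_root_.smul_apply, LinearMap.coe_toContinuousLinearMap', dotProductBilin_apply_apply,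
    smul_eq_mul]
  ring

theorem divergence_rpow_smul_spiralField {A : Matrix ι ι ℝ} (hA : Aᵀ = -A) {x : ι → ℝ}
    (hx : x ≠ 0) :
    divergence (fun y => (y ⬝ᵥ y) ^ (-(Fintype.card ι + 2) / 2 : ℝ) • spiralField A y) x =
      2 * (x ⬝ᵥ x) ^ (-(Fintype.card ι + 2) / 2 : ℝ) := by
  have hxx : x ⬝ᵥ x ≠ 0 := (dotProduct_self_pos hx).ne'
  rw [divergence_dotProduct_self_rpow_smul _ hx (differentiableAt_spiralField A x),
    dotProduct_spiralField, divergence_spiralField,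
    dotProduct_mulVec_self_eq_zero_of_transpose_eq_neg hA, trace_eq_zero_of_transpose_eq_neg hA,
    Real.rpow_sub_one hxx]
  field_simp
  ring

end SpiralField

/-- With g(x) = x₁²+x₂²+x₃², X¹(x) = (−x₁+x₂+x₁g, −x₁−x₂+x₂g, −x₃+x₃g) and
φ = g^(−5/2), the divergence of Z₁ = φ·X¹ is strictly positive on ℝ³ ∖ {0}. -/
theorem example_2_9_divergence_positive
    (g : (Fin 3 → ℝ) → ℝ) (hg : g = fun x => x 0 ^ 2 + x 1 ^ 2 + x 2 ^ 2)
    (X1 : (Fin 3 → ℝ) → (Fin 3 → ℝ))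
    (hX1 : ∀ x, X1 x = ![ -x 0 + x 1 + x 0 * g x,
                          -x 0 - x 1 + x 1 * g x,
                          -x 2 + x 2 * g x ])
    (φ : (Fin 3 → ℝ) → ℝ) (hφ : φ = fun x => (g x) ^ (-(5 : ℝ) / 2)) :
    ∀ x : Fin 3 → ℝ, x ≠ 0 →
      0 < ∑ i, fderiv ℝ (fun y => φ y * X1 y i) x (Pi.single i 1) := by
  intro x hx
  subst hg hφ
  set J : Matrix (Fin 3) (Fin 3) ℝ := !![0, 1, 0; -1, 0, 0; 0, 0, 0]
  have hJ : Jᵀ = -J := by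
    ext i j
    fin_cases i <;> fin_cases j <;> simp [J]
  have hnormSq (y : Fin 3 → ℝ) : y 0 ^ 2 + y 1 ^ 2 + y 2 ^ 2 = y ⬝ᵥ y := by
    simp [dotProduct, Fin.sum_univ_three, sq]
  have hX1J : X1 = spiralField J := by
    ext y i
    fin_cases i <;> simp [hX1, spiralField, J, hnormSq, dotProduct, Fin.sum_univ_three] <;> ring
  have hexp : (-(5 : ℝ) / 2) = -(Fintype.card (Fin 3) + 2) / 2 := by norm_num
  simp only [hnormSq, hX1J, hexp]
  change 0 < divergence (fun y => (y ⬝ᵥ y) ^ _ • spiralField J y) x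
  rw [divergence_rpow_smul_spiralField hJ hx]
  exact mul_pos two_pos (Real.rpow_pos_of_pos (dotProduct_self_pos hx) _)
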